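/- arXiv:1512.05417 — 2 statements merged into one kernel-verified Lean document; each statement's English description precedes it below -/
import Mathlib

section
/- The functions ρ_0, …, ρ_K defined by the explicit recursion form a probability mass function at every time: Σ_{k=0}^K ρ_k(t) = 1 for all t ≥ 0. -/
/-!
Each `ρ_k` is differentiable with `ρ_k' = φ_{k-1} - φ_k`, where `φ_k = ρ_k q_k` (`rhoFlux`) is the probability
flux from state `k` to state `k + 1` (and `φ_{-1} = φ_K = 0`): the middle `ρ_k` are variation-of-constants
solutions of `y' = φ_{k-1} - q_k y`. Hence the derivative of `Σ_k ρ_k` telescopes to zero, and the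
sum keeps its value `ρ_0(0) = 1`.
-/

open MeasureTheory

/-- The recursively defined probabilities `ρ_k` from the Fokker–Planck solution formula:
`ρ_0(t) = exp(-∫_0^t g_0)`, `ρ_{k+1}(t) = ∫_0^t ρ_k(s) g_k(s) exp(-∫_s^t g_{k+1}) ds`
for `k+1 < K`, and `ρ_K(t) = ∫_0^t ρ_{K-1}(s) g_{K-1}(s) ds`. -/
noncomputable def rho (K : ℕ) (g : ℕ → ℝ → ℝ) : ℕ → ℝ → ℝ
  | 0 => fun t => Real.exp (-(∫ s in (0:ℝ)..t, g 0 s))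
  | (k+1) => fun t =>
      if k + 1 = K then ∫ s in (0:ℝ)..t, rho K g k s * g k s
      else ∫ s in (0:ℝ)..t, rho K g k s * g k s * Real.exp (-(∫ u in s..t, g (k+1) u))

open Real

theorem hasDerivAt_integral_mul_exp_neg_integral {f g : ℝ → ℝ} (hf : Continuous f)
    (hg : Continuous g) (a t : ℝ) :
    HasDerivAt (fun t => ∫ s in a..t, f s * exp (-∫ u in s..t, g u))
      (f t - g t * ∫ s in a..t, f s * exp (-∫ u in s..t, g u)) t := by
  set G : ℝ → ℝ := fun t => ∫ u in a..t, g u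
  have hG : ∀ t, HasDerivAt G (g t) t := fun t => (hg.integral_hasStrictDerivAt a t).hasDerivAt
  have hG_cont : Continuous G := continuous_iff_continuousAt.2 fun t => (hG t).continuousAt
  have hsplit : ∀ s t, (∫ u in s..t, g u) = G t - G s := fun s t =>
    (intervalIntegral.integral_interval_sub_left (hg.intervalIntegrable _ _)
      (hg.intervalIntegrable _ _)).symm
  -- `∫_s^t g = G t - G s` pulls the dependence on `t` out of the integral
  have hfun : (fun t => ∫ s in a..t, f s * exp (-∫ u in s..t, g u))
      = fun t => exp (-G t) * ∫ s in a..t, f s * exp (G s) := by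
    funext t
    rw [← intervalIntegral.integral_const_mul]
    refine intervalIntegral.integral_congr fun s _ => ?_
    rw [hsplit, neg_sub, exp_sub, exp_neg]
    field_simp
  have hI : HasDerivAt (fun t => ∫ s in a..t, f s * exp (G s)) (f t * exp (G t)) t :=
    ((hf.mul (continuous_exp.comp hG_cont)).integral_hasStrictDerivAt a t).hasDerivAt
  have hval : (∫ s in a..t, f s * exp (-∫ u in s..t, g u))
      = exp (-G t) * ∫ s in a..t, f s * exp (G s) := congrFun hfun t
  rw [hfun, hval]
  refine (((hG t).neg.exp).mul hI).congr_deriv ?_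
  simp only [Pi.neg_apply, exp_neg]
  field_simp
  ring

section

variable {K : ℕ} {q : ℕ → ℝ → ℝ}

noncomputable def rhoFlux (K : ℕ) (q : ℕ → ℝ → ℝ) (k : ℕ) (t : ℝ) : ℝ :=
  if k < K then rho K q k t * q k t else 0

theorem rhoFlux_self (t : ℝ) : rhoFlux K q K t = 0 := by
  simp [rhoFlux]

theorem rho_zero_eq : rho K q 0 = fun t => exp (-∫ s in (0 : ℝ)..t, q 0 s) := rfl

theorem rho_succ_of_eq {k : ℕ} (hk : k + 1 = K) :
    rho K q (k + 1) = fun t => ∫ s in (0 : ℝ)..t, rho K q k s * q k s := by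
  funext t; simp [rho, hk]

theorem rho_succ_of_ne {k : ℕ} (hk : k + 1 ≠ K) :
    rho K q (k + 1) = fun t =>
      ∫ s in (0 : ℝ)..t, rho K q k s * q k s * exp (-∫ u in s..t, q (k + 1) u) := by
  funext t; simp [rho, hk]

theorem rho_zero_apply_zero : rho K q 0 0 = 1 := by
  simp [rho]

theorem rho_succ_apply_zero (k : ℕ) : rho K q (k + 1) 0 = 0 := by
  simp only [rho]
  split_ifs <;> simp

theorem hasDerivAt_rho_zero (hK : 0 < K) (hq : Continuous (q 0)) (t : ℝ) :
    HasDerivAt (rho K q 0) (-rhoFlux K q 0 t) t := by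
  rw [rho_zero_eq]
  refine ((hq.integral_hasStrictDerivAt 0 t).hasDerivAt.neg.exp).congr_deriv ?_
  simp [rhoFlux, hK, rho_zero_eq]

theorem hasDerivAt_rho_succ {k : ℕ} (hk : k < K) (hq : ∀ j, j < K → Continuous (q j))
    (hρ : Continuous (rho K q k)) (t : ℝ) :
    HasDerivAt (rho K q (k + 1)) (rhoFlux K q k t - rhoFlux K q (k + 1) t) t := by
  have hf : Continuous fun s => rho K q k s * q k s := hρ.mul (hq k hk)
  rcases (Nat.succ_le_of_lt hk).eq_or_lt with hK | hK
  · rw [rho_succ_of_eq hK]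
    refine (hf.integral_hasStrictDerivAt 0 t).hasDerivAt.congr_deriv ?_
    simp [rhoFlux, ← hK]
  · rw [rho_succ_of_ne hK.ne]
    refine (hasDerivAt_integral_mul_exp_neg_integral hf (hq (k + 1) hK) 0 t).congr_deriv ?_
    simp [rhoFlux, hk, hK, rho_succ_of_ne hK.ne, mul_comm]

theorem continuous_rho (hK : 0 < K) (hq : ∀ j, j < K → Continuous (q j)) :
    ∀ k, k ≤ K → Continuous (rho K q k)
  | 0, _ => continuous_iff_continuousAt.2 fun t =>
      (hasDerivAt_rho_zero hK (hq 0 hK) t).continuousAt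
  | k + 1, hk => continuous_iff_continuousAt.2 fun t =>
      (hasDerivAt_rho_succ hk hq (continuous_rho hK hq k (Nat.le_of_succ_le hk)) t).continuousAt

theorem hasDerivAt_sum_rho (hK : 0 < K) (hq : ∀ j, j < K → Continuous (q j)) (t : ℝ) :
    HasDerivAt (fun t => ∑ k ∈ Finset.range (K + 1), rho K q k t) 0 t := by
  simp only [Finset.sum_range_succ' _ K]
  refine ((HasDerivAt.fun_sum fun k hk => hasDerivAt_rho_succ (Finset.mem_range.mp hk) hq
      (continuous_rho hK hq k (Finset.mem_range.mp hk).le) t).add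
    (hasDerivAt_rho_zero hK (hq 0 hK) t)).congr_deriv ?_
  rw [Finset.sum_range_sub' (fun k => rhoFlux K q k t), rhoFlux_self]
  ring

end

/-- The recursively defined `ρ_0, …, ρ_K` form a probability mass function at every time:
`Σ_{k=0}^K ρ_k(t) = 1` for all `t ≥ 0`. -/
theorem rho_sum_eq_one (K : ℕ) (hK : 1 ≤ K) (q : ℕ → ℝ → ℝ)
    (hq : ∀ k, k < K → Continuous (q k)) :
    ∀ t : ℝ, 0 ≤ t → ∑ k ∈ Finset.range (K + 1), rho K q k t = 1 := by
  intro t _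
  have hderiv := hasDerivAt_sum_rho hK hq
  calc ∑ k ∈ Finset.range (K + 1), rho K q k t
      = ∑ k ∈ Finset.range (K + 1), rho K q k 0 :=
        is_const_of_deriv_eq_zero (fun u => (hderiv u).differentiableAt)
          (fun u => (hderiv u).deriv) t 0
    _ = 1 := by simp [Finset.sum_range_succ', rho_succ_apply_zero, rho_zero_apply_zero]
end

section
/- (Influence error, multiplicative bound.) Let ε ∈ (0, 1), let ρ_0, …, ρ_K be defined by the recursion with the rates q_0, …, q_{K−1}, and ρ̂_0, …, ρ̂_K by the recursion with the rates q̂_0, …, q̂_{K−1}, with influences μ(t) = Σ_{k=0}^K k ρ_k(t) and μ̂(t) = Σ_{k=0}^K k ρ̂_k(t). Suppose all rates are strictly positive and for every k = 0, …, K−1 there is q̄_k > 0 with q_k(t) ≤ q̄_k for all t ≥ 0 such that |q̂_k(t) − q_k(t)| / q_k(t) ≤ min{ log(1 + ε/2) / (q̄_k t), ε / (2 + ε) } for all t > 0. Then (1 − ε)^K ≤ μ̂(t) / μ(t) ≤ (1 + ε)^K for every t > 0, and consequently |μ̂(t) − μ(t)| / μ(t) ≤ (1 + ε)^K − 1 for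 every t > 0. -/
open MeasureTheory

noncomputable def influence (K : ℕ) (g : ℕ → ℝ → ℝ) (t : ℝ) : ℝ :=
  ∑ k ∈ Finset.range (K + 1), (k : ℝ) * rho K g k t

/-!
Write `S_g(s, t) = survival g s t = exp (-∫_s^t g)` and let `F_j(t) = flux K g j t = ∫_0^t ρ_j g_j`,
the probability of having left state `j` by time `t`. Then `ρ_{j+1} = F_j - F_{j+1}` and
`ρ_K = F_{K-1}`, so that `μ = Σ_{j<K} F_j`. With `η = ε / (2 + ε)` the hypothesis gives
`|q̂_k - q_k| ≤ η q_k`, which convexity of `exp` turns into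
`|S_{q̂_k} - S_{q_k}| ≤ η (1 - S_{q_k})`. Now `F_0 = 1 - S_{g_0}(0, ·)` and, integrating by parts,
`F_{j+1}(t) = ∫_0^t F_j'(s) (1 - S_{g_{j+1}}(s, t)) ds = ∫_0^t F_j(s) g_{j+1}(s) S_{g_{j+1}}(s, t) ds`
with `F_j' = ρ_j g_j`.
The second form transports a bound on `F̂_j / F_j`, the first one adds the factor `1 ± η`, so by
induction `(1 - η)^{j+1} F_j ≤ F̂_j ≤ (1 + η)^{j+1} F_j`; summing over `j` bounds `μ̂ / μ`.
-/

open Real Set Finset intervalIntegral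

theorem abs_exp_neg_sub_exp_neg_le {η x y : ℝ} (hη0 : 0 ≤ η) (hη1 : η ≤ 1)
    (hxy : |y - x| ≤ η * x) : |exp (-y) - exp (-x)| ≤ η * (1 - exp (-x)) := by
  have hconv : exp (η * x) ≤ (1 - η) + η * exp x := by
    simpa [smul_eq_mul] using convexOn_exp.2 (mem_univ 0) (mem_univ x) (by linarith) hη0
      (by ring : 1 - η + η = 1)
  have hmain : exp (-x) * (exp (η * x) - 1) ≤ η * (1 - exp (-x)) := by
    have h1 : exp (-x) * exp x = 1 := by rw [← exp_add]; simp
    nlinarith [exp_pos (-x)]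
  obtain ⟨hlo, hhi⟩ := abs_le.1 hxy
  have hup : exp (-y) ≤ exp (-x) * exp (η * x) := by rw [← exp_add]; gcongr; linarith
  have hdown : exp (-x) * exp (-(η * x)) ≤ exp (-y) := by rw [← exp_add]; gcongr; linarith
  have h1 := add_one_le_exp (-(η * x))
  have h2 := add_one_le_exp (η * x)
  rw [abs_le]
  constructor <;> nlinarith [exp_pos (-x)]

theorem two_le_one_sub_pow_add_one_add_pow {x : ℝ} (hx : -2 ≤ x) (hx' : x ≤ 2) (n : ℕ) :
    2 ≤ (1 - x) ^ n + (1 + x) ^ n := by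
  have h1 := one_add_mul_le_pow hx n
  have h2 := one_add_mul_le_pow (a := -x) (by linarith) n
  rw [← sub_eq_add_neg] at h2
  linarith

theorem sum_range_succ_natCast_mul_eq (a F : ℕ → ℝ) (n : ℕ)
    (ha : ∀ k < n, a (k + 1) = F k - F (k + 1)) :
    ∑ k ∈ range (n + 1), (k : ℝ) * a k = ∑ j ∈ range n, F j - n * F n := by
  induction n with
  | zero => simp
  | succ n ih =>
    rw [sum_range_succ, ih fun k hk => ha k (by omega), ha n (by omega), sum_range_succ]
    push_cast
    ring

noncomputable def survival (g : ℝ → ℝ) (s t : ℝ) : ℝ := exp (-∫ u in s..t, g u)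

section Survival

variable {g : ℝ → ℝ}

@[simp] theorem survival_self (g : ℝ → ℝ) (t : ℝ) : survival g t t = 1 := by simp [survival]

theorem survival_pos (g : ℝ → ℝ) (s t : ℝ) : 0 < survival g s t := exp_pos _

theorem survival_eq_exp_mul_exp (hg : Continuous g) (s t : ℝ) :
    survival g s t = exp (∫ u in 0..s, g u) * exp (-∫ u in 0..t, g u) := by
  rw [survival, ← exp_add, ← integral_interval_sub_left (hg.intervalIntegrable 0 t)
    (hg.intervalIntegrable 0 s)]
  ring_nf

theorem hasDerivAt_survival_left (hg : Continuous g) (s t : ℝ) :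
    HasDerivAt (fun s => survival g s t) (survival g s t * g s) s := by
  simp_rw [survival_eq_exp_mul_exp hg]
  exact ((hg.integral_hasStrictDerivAt 0 s).hasDerivAt.exp.mul_const _).congr_deriv (by ring)

theorem hasDerivAt_survival_right (hg : Continuous g) (s t : ℝ) :
    HasDerivAt (fun t => survival g s t) (-(survival g s t * g t)) t := by
  simp_rw [survival_eq_exp_mul_exp hg]
  exact ((hg.integral_hasStrictDerivAt 0 t).hasDerivAt.fun_neg.exp.const_mul _).congr_deriv
    (by ring)

theorem continuous_survival_left (hg : Continuous g) (t : ℝ) :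
    Continuous fun s => survival g s t :=
  continuous_iff_continuousAt.2 fun s => (hasDerivAt_survival_left hg s t).continuousAt

theorem continuous_survival_right (hg : Continuous g) (s : ℝ) :
    Continuous fun t => survival g s t :=
  continuous_iff_continuousAt.2 fun t => (hasDerivAt_survival_right hg s t).continuousAt

theorem survival_lt_one {s t : ℝ} (hg : IntervalIntegrable g volume s t) (hst : s < t)
    (hpos : ∀ u ∈ Ioo s t, 0 < g u) : survival g s t < 1 := by
  rw [survival, exp_lt_one_iff, neg_lt_zero]
  exact intervalIntegral_pos_of_pos_on hg hpos hst

theorem abs_survival_sub_le {ĝ : ℝ → ℝ} {η s t : ℝ} (hg : IntervalIntegrable g volume s t)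
    (hĝ : IntervalIntegrable ĝ volume s t) (hη0 : 0 ≤ η) (hη1 : η ≤ 1) (hst : s ≤ t)
    (hclose : ∀ u ∈ Icc s t, |ĝ u - g u| ≤ η * g u) :
    |survival ĝ s t - survival g s t| ≤ η * (1 - survival g s t) := by
  refine abs_exp_neg_sub_exp_neg_le hη0 hη1 ?_
  calc |(∫ u in s..t, ĝ u) - ∫ u in s..t, g u|
      = |∫ u in s..t, (ĝ u - g u)| := by rw [integral_sub hĝ hg]
    _ ≤ ∫ u in s..t, |ĝ u - g u| := abs_integral_le_integral_abs hst
    _ ≤ ∫ u in s..t, η * g u :=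
        integral_mono_on hst (hĝ.sub hg).abs (hg.const_mul η) hclose
    _ = η * ∫ u in s..t, g u := integral_const_mul η _

theorem survival_add_integral (hg : Continuous g) (t : ℝ) :
    survival g 0 t + ∫ r in 0..t, survival g 0 r * g r = 1 := by
  have hftc := integral_eq_sub_of_hasDerivAt (fun r _ => hasDerivAt_survival_right hg 0 r)
    (((continuous_survival_right hg 0).mul hg).neg.intervalIntegrable 0 t)
  rw [intervalIntegral.integral_neg, survival_self] at hftc
  linarith

theorem hasDerivAt_integral_mul_survival {h : ℝ → ℝ} (hh : Continuous h) (hg : Continuous g)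
    (t : ℝ) :
    HasDerivAt (fun t => ∫ s in 0..t, h s * survival g s t)
      (h t - g t * ∫ s in 0..t, h s * survival g s t) t := by
  set G : ℝ → ℝ := fun x => ∫ u in 0..x, g u
  have hG : ∀ x, HasDerivAt G (g x) x := fun x => (hg.integral_hasStrictDerivAt 0 x).hasDerivAt
  have hGc : Continuous G := continuous_iff_continuousAt.2 fun x => (hG x).continuousAt
  have hfac : ∀ t, ∫ s in 0..t, h s * survival g s t =
      (∫ s in 0..t, h s * exp (G s)) * exp (-G t) := by
    intro t
    simp_rw [survival_eq_exp_mul_exp hg, ← mul_assoc]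
    exact integral_mul_const _ _
  have hI : HasDerivAt (fun t => ∫ s in 0..t, h s * exp (G s)) (h t * exp (G t)) t :=
    ((hh.mul (continuous_exp.comp hGc)).integral_hasStrictDerivAt 0 t).hasDerivAt
  simp_rw [hfac]
  refine (hI.mul (hG t).fun_neg.exp).congr_deriv ?_
  have : exp (G t) * exp (-G t) = 1 := by rw [← exp_add]; simp
  linear_combination h t * this

theorem integral_mul_survival_add_integral {h : ℝ → ℝ} (hh : Continuous h) (hg : Continuous g)
    (t : ℝ) :
    (∫ s in 0..t, h s * survival g s t) +
        ∫ r in 0..t, (∫ s in 0..r, h s * survival g s r) * g r = ∫ s in 0..t, h s := by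
  let y : ℝ → ℝ := fun t => ∫ s in 0..t, h s * survival g s t
  have hy := hasDerivAt_integral_mul_survival hh hg
  have hyc : Continuous y := continuous_iff_continuousAt.2 fun x => (hy x).continuousAt
  have hftc := integral_eq_sub_of_hasDerivAt (fun x _ => hy x)
    ((hh.sub (hg.mul hyc)).intervalIntegrable 0 t)
  rw [integral_sub (hh.intervalIntegrable 0 t) ((hg.fun_mul hyc).intervalIntegrable 0 t)] at hftc
  simp only [integral_same, sub_zero] at hftc
  simp_rw [mul_comm _ (g _)]
  linarith

theorem integral_mul_one_sub_survival {f f' : ℝ → ℝ} (hf : ∀ x, HasDerivAt f (f' x) x)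
    (hf' : Continuous f') (hf0 : f 0 = 0) (hg : Continuous g) (t : ℝ) :
    ∫ s in 0..t, f' s * (1 - survival g s t) = ∫ s in 0..t, f s * (survival g s t * g s) := by
  have hS := continuous_survival_left hg t
  rw [integral_mul_deriv_eq_deriv_mul (fun x _ => hf x)
    (fun x _ => hasDerivAt_survival_left hg x t) (hf'.intervalIntegrable 0 t)
    ((hS.mul hg).intervalIntegrable 0 t)]
  simp_rw [mul_one_sub]
  rw [integral_sub (hf'.intervalIntegrable 0 t) ((hf'.fun_mul hS).intervalIntegrable 0 t),
    integral_eq_sub_of_hasDerivAt (fun x _ => hf x) (hf'.intervalIntegrable 0 t)]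
  simp [hf0]

end Survival

noncomputable def flux (K : ℕ) (g : ℕ → ℝ → ℝ) (j : ℕ) (t : ℝ) : ℝ :=
  ∫ s in 0..t, rho K g j s * g j s

section Flux

variable {K j : ℕ} {g : ℕ → ℝ → ℝ}

theorem rho_zero_apply (t : ℝ) : rho K g 0 t = survival (g 0) 0 t := rfl

theorem rho_succ_apply (hj : j + 1 < K) (t : ℝ) :
    rho K g (j + 1) t = ∫ s in 0..t, rho K g j s * g j s * survival (g (j + 1)) s t := by
  simp [rho, hj.ne, survival]

theorem rho_succ_self_apply (t : ℝ) : rho (j + 1) g (j + 1) t = flux (j + 1) g j t := by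
  simp [rho, flux]

theorem continuous_rho_s7 (hg : ∀ k < K, Continuous (g k)) : ∀ j < K, Continuous (rho K g j)
  | 0, hK => continuous_survival_right (hg 0 hK) 0
  | j + 1, hj => by
    have hρ := continuous_rho_s7 hg j (by omega)
    simp_rw [funext (rho_succ_apply (g := g) hj)]
    exact continuous_iff_continuousAt.2 fun t =>
      (hasDerivAt_integral_mul_survival (hρ.mul (hg j (by omega))) (hg (j + 1) hj) t).continuousAt

theorem rho_nonneg (hg : ∀ k < K, ∀ t, 0 ≤ t → 0 ≤ g k t) :
    ∀ j < K, ∀ t, 0 ≤ t → 0 ≤ rho K g j t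
  | 0, _, t, _ => (survival_pos _ 0 t).le
  | j + 1, hj, t, ht => by
    rw [rho_succ_apply hj]
    refine integral_nonneg ht fun s hs => ?_
    have := rho_nonneg hg j (by omega) s hs.1
    have := hg j (by omega) s hs.1
    have := survival_pos (g (j + 1)) s t
    positivity

theorem hasDerivAt_flux (hg : ∀ k < K, Continuous (g k)) (hj : j < K) (t : ℝ) :
    HasDerivAt (flux K g j) (rho K g j t * g j t) t :=
  ((continuous_rho_s7 hg j hj).mul (hg j hj)).integral_hasStrictDerivAt 0 t |>.hasDerivAt

theorem continuous_flux (hg : ∀ k < K, Continuous (g k)) (hj : j < K) :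
    Continuous (flux K g j) :=
  continuous_iff_continuousAt.2 fun t => (hasDerivAt_flux hg hj t).continuousAt

theorem flux_apply_zero (K : ℕ) (g : ℕ → ℝ → ℝ) (j : ℕ) : flux K g j 0 = 0 :=
  integral_same

theorem flux_nonneg (hg : ∀ k < K, ∀ t, 0 ≤ t → 0 ≤ g k t) (hj : j < K) {t : ℝ}
    (ht : 0 ≤ t) : 0 ≤ flux K g j t :=
  integral_nonneg ht fun s hs => mul_nonneg (rho_nonneg hg j hj s hs.1) (hg j hj s hs.1)

theorem flux_zero_eq_one_sub_survival (hg : Continuous (g 0)) (t : ℝ) :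
    flux K g 0 t = 1 - survival (g 0) 0 t := by
  rw [← survival_add_integral hg t, flux]
  simp only [rho_zero_apply, add_sub_cancel_left]

theorem rho_succ_add_flux (hg : ∀ k < K, Continuous (g k)) (hj : j + 1 < K) (t : ℝ) :
    rho K g (j + 1) t + flux K g (j + 1) t = flux K g j t := by
  simp_rw [flux, rho_succ_apply hj]
  exact integral_mul_survival_add_integral
    ((continuous_rho_s7 hg j (by omega)).mul (hg j (by omega))) (hg (j + 1) hj) t

theorem influence_eq_sum_flux (hg : ∀ k < K, Continuous (g k)) (t : ℝ) :
    influence K g t = ∑ j ∈ range K, flux K g j t := by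
  cases K with
  | zero => simp [influence]
  | succ n =>
    rw [influence, sum_range_succ,
      sum_range_succ_natCast_mul_eq _ (fun j => flux (n + 1) g j t) n
        fun k hk => by rw [← rho_succ_add_flux hg (by omega) t]; ring,
      rho_succ_self_apply, sum_range_succ]
    push_cast
    ring

theorem influence_pos (hK : 0 < K) (hg : ∀ k < K, Continuous (g k))
    (hgpos : ∀ k < K, ∀ t, 0 ≤ t → 0 < g k t) {t : ℝ} (ht : 0 < t) : 0 < influence K g t := by
  rw [influence_eq_sum_flux hg]
  refine sum_pos' (fun j hj => flux_nonneg (fun k hk s hs => (hgpos k hk s hs).le)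
    (mem_range.1 hj) ht.le) ⟨0, mem_range.2 hK, ?_⟩
  rw [flux_zero_eq_one_sub_survival (hg 0 hK), sub_pos]
  exact survival_lt_one ((hg 0 hK).intervalIntegrable 0 t) ht fun u hu => hgpos 0 hK u hu.1.le

theorem flux_succ (hg : ∀ k < K, Continuous (g k)) (hj : j + 1 < K) (t : ℝ) :
    flux K g (j + 1) t =
      ∫ s in 0..t, rho K g j s * g j s * (1 - survival (g (j + 1)) s t) := by
  have hp := (continuous_rho_s7 hg j (by omega)).fun_mul (hg j (by omega))
  simp_rw [mul_one_sub]
  rw [integral_sub (hp.intervalIntegrable 0 t)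
    ((hp.fun_mul (continuous_survival_left (hg (j + 1) hj) t)).intervalIntegrable 0 t),
    ← rho_succ_apply hj, ← flux, ← rho_succ_add_flux hg hj t]
  ring

theorem integral_flux_mul_survival_mul (hg : ∀ k < K, Continuous (g k)) (hj : j < K)
    {h : ℝ → ℝ} (hh : Continuous h) (t : ℝ) :
    ∫ s in 0..t, flux K g j s * (survival h s t * h s) =
      ∫ s in 0..t, rho K g j s * g j s * (1 - survival h s t) :=
  (integral_mul_one_sub_survival (hasDerivAt_flux hg hj)
    ((continuous_rho_s7 hg j hj).fun_mul (hg j hj)) (flux_apply_zero K g j) hh t).symm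

theorem flux_succ_eq_integral_flux_mul (hg : ∀ k < K, Continuous (g k)) (hj : j + 1 < K)
    (t : ℝ) :
    flux K g (j + 1) t =
      ∫ s in 0..t, flux K g j s * (survival (g (j + 1)) s t * g (j + 1) s) := by
  rw [flux_succ hg hj, integral_flux_mul_survival_mul hg (by omega) (hg (j + 1) hj)]

end Flux

structure IsRelApprox (K : ℕ) (η : ℝ) (q qhat : ℕ → ℝ → ℝ) : Prop where
  continuous : ∀ k < K, Continuous (q k)
  continuous_hat : ∀ k < K, Continuous (qhat k)
  nonneg : ∀ k < K, ∀ t, 0 ≤ t → 0 ≤ q k t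
  abs_sub_le : ∀ k < K, ∀ t, 0 ≤ t → |qhat k t - q k t| ≤ η * q k t

namespace IsRelApprox

variable {K j : ℕ} {η t : ℝ} {q qhat : ℕ → ℝ → ℝ}

theorem nonneg_hat (h : IsRelApprox K η q qhat) (hη1 : η ≤ 1) {k : ℕ} (hk : k < K) {t : ℝ}
    (ht : 0 ≤ t) : 0 ≤ qhat k t := by
  have := (abs_le.1 (h.abs_sub_le k hk t ht)).1
  nlinarith [h.nonneg k hk t ht]

theorem one_sub_survival_bounds (h : IsRelApprox K η q qhat) (hη0 : 0 ≤ η) (hη1 : η ≤ 1)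
    {k : ℕ} (hk : k < K) {s : ℝ} (hs : 0 ≤ s) (hst : s ≤ t) :
    (1 - η) * (1 - survival (q k) s t) ≤ 1 - survival (qhat k) s t ∧
      1 - survival (qhat k) s t ≤ (1 + η) * (1 - survival (q k) s t) := by
  have := abs_le.1 <| abs_survival_sub_le ((h.continuous k hk).intervalIntegrable s t)
    ((h.continuous_hat k hk).intervalIntegrable s t) hη0 hη1 hst
    fun u hu => h.abs_sub_le k hk u (hs.trans hu.1)
  constructor <;> linarith

theorem integral_flux_mul_survival_hat_bounds (h : IsRelApprox K η q qhat) (hη0 : 0 ≤ η)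
    (hη1 : η ≤ 1) (hj : j + 1 < K) (ht : 0 ≤ t) :
    (1 - η) * flux K q (j + 1) t ≤
        ∫ s in 0..t, flux K q j s * (survival (qhat (j + 1)) s t * qhat (j + 1) s) ∧
      ∫ s in 0..t, flux K q j s * (survival (qhat (j + 1)) s t * qhat (j + 1) s) ≤
        (1 + η) * flux K q (j + 1) t := by
  have hjK : j < K := by omega
  have hpc := (continuous_rho_s7 h.continuous j hjK).fun_mul (h.continuous j hjK)
  have hSc := continuous_survival_left (h.continuous (j + 1) hj) t
  have hShatc := continuous_survival_left (h.continuous_hat (j + 1) hj) t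
  have hI : ∀ {f : ℝ → ℝ}, Continuous f → IntervalIntegrable f volume 0 t :=
    fun hf => hf.intervalIntegrable 0 t
  have hp : ∀ s ∈ Icc 0 t, 0 ≤ rho K q j s * q j s := fun s hs =>
    mul_nonneg (rho_nonneg h.nonneg j hjK s hs.1) (h.nonneg j hjK s hs.1)
  rw [integral_flux_mul_survival_mul h.continuous hjK (h.continuous_hat (j + 1) hj),
    flux_succ h.continuous hj, ← intervalIntegral.integral_const_mul,
    ← intervalIntegral.integral_const_mul]
  constructor <;> refine integral_mono_on ht (hI (by fun_prop)) (hI (by fun_prop)) fun s hs => ?_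
    <;> rw [mul_left_comm]
  · exact mul_le_mul_of_nonneg_left (h.one_sub_survival_bounds hη0 hη1 hj hs.1 hs.2).1 (hp s hs)
  · exact mul_le_mul_of_nonneg_left (h.one_sub_survival_bounds hη0 hη1 hj hs.1 hs.2).2 (hp s hs)

theorem flux_succ_bounds (h : IsRelApprox K η q qhat) (hη0 : 0 ≤ η) (hη1 : η ≤ 1)
    (hj : j + 1 < K) (ht : 0 ≤ t) {a b : ℝ} (ha : 0 ≤ a) (hb : 0 ≤ b)
    (hprev : ∀ s ∈ Icc 0 t, a * flux K q j s ≤ flux K qhat j s ∧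
      flux K qhat j s ≤ b * flux K q j s) :
    a * (1 - η) * flux K q (j + 1) t ≤ flux K qhat (j + 1) t ∧
      flux K qhat (j + 1) t ≤ b * (1 + η) * flux K q (j + 1) t := by
  have hjK : j < K := by omega
  obtain ⟨hlo, hhi⟩ := h.integral_flux_mul_survival_hat_bounds hη0 hη1 hj ht
  set w := fun s => survival (qhat (j + 1)) s t * qhat (j + 1) s
  have hw : ∀ s ∈ Icc 0 t, 0 ≤ w s := fun s hs =>
    mul_nonneg (survival_pos _ s t).le (h.nonneg_hat hη1 hj hs.1)
  have hwc : Continuous w := (continuous_survival_left (h.continuous_hat (j + 1) hj) t).fun_mul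
    (h.continuous_hat (j + 1) hj)
  have hF := continuous_flux h.continuous hjK
  have hFhat := continuous_flux h.continuous_hat hjK
  have hI : ∀ {f : ℝ → ℝ}, Continuous f → IntervalIntegrable f volume 0 t :=
    fun hf => hf.intervalIntegrable 0 t
  rw [flux_succ_eq_integral_flux_mul h.continuous_hat hj t, mul_assoc, mul_assoc]
  constructor
  · calc a * ((1 - η) * flux K q (j + 1) t)
        ≤ a * ∫ s in 0..t, flux K q j s * w s := by gcongr
      _ = ∫ s in 0..t, a * flux K q j s * w s := by
          simp_rw [mul_assoc, intervalIntegral.integral_const_mul]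
      _ ≤ ∫ s in 0..t, flux K qhat j s * w s :=
          integral_mono_on ht (hI (by fun_prop)) (hI (by fun_prop)) fun s hs =>
            mul_le_mul_of_nonneg_right (hprev s hs).1 (hw s hs)
  · calc ∫ s in 0..t, flux K qhat j s * w s
        ≤ ∫ s in 0..t, b * flux K q j s * w s :=
          integral_mono_on ht (hI (by fun_prop)) (hI (by fun_prop)) fun s hs =>
            mul_le_mul_of_nonneg_right (hprev s hs).2 (hw s hs)
      _ = b * ∫ s in 0..t, flux K q j s * w s := by
          simp_rw [mul_assoc, intervalIntegral.integral_const_mul]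
      _ ≤ b * ((1 + η) * flux K q (j + 1) t) := by gcongr

theorem flux_bounds (h : IsRelApprox K η q qhat) (hη0 : 0 ≤ η) (hη1 : η ≤ 1) :
    ∀ j < K, ∀ t, 0 ≤ t → (1 - η) ^ (j + 1) * flux K q j t ≤ flux K qhat j t ∧
      flux K qhat j t ≤ (1 + η) ^ (j + 1) * flux K q j t
  | 0, hK, t, ht => by
    rw [flux_zero_eq_one_sub_survival (h.continuous 0 hK),
      flux_zero_eq_one_sub_survival (h.continuous_hat 0 hK), zero_add, pow_one, pow_one]
    exact h.one_sub_survival_bounds hη0 hη1 hK le_rfl ht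
  | j + 1, hj, t, ht => by
    rw [pow_succ _ (j + 1), pow_succ _ (j + 1)]
    exact h.flux_succ_bounds hη0 hη1 hj ht (pow_nonneg (sub_nonneg.2 hη1) _)
      (pow_nonneg (by linarith) _) fun s hs => flux_bounds h hη0 hη1 j (by omega) s hs.1

theorem influence_bounds (h : IsRelApprox K η q qhat) (hη0 : 0 ≤ η) (hη1 : η ≤ 1)
    (ht : 0 ≤ t) :
    (1 - η) ^ K * influence K q t ≤ influence K qhat t ∧
      influence K qhat t ≤ (1 + η) ^ K * influence K q t := by
  rw [influence_eq_sum_flux h.continuous, influence_eq_sum_flux h.continuous_hat, mul_sum,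
    mul_sum]
  have hF : ∀ j ∈ range K, 0 ≤ flux K q j t := fun j hj =>
    flux_nonneg h.nonneg (mem_range.1 hj) ht
  have hb := fun j (hj : j ∈ range K) => h.flux_bounds hη0 hη1 j (mem_range.1 hj) t ht
  refine ⟨sum_le_sum fun j hj => ?_, sum_le_sum fun j hj => ?_⟩
  · exact (mul_le_mul_of_nonneg_right (pow_le_pow_of_le_one (by linarith) (by linarith)
      (mem_range.1 hj)) (hF j hj)).trans (hb j hj).1
  · exact (hb j hj).2.trans (mul_le_mul_of_nonneg_right
      (pow_le_pow_right₀ (by linarith) (mem_range.1 hj)) (hF j hj))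

end IsRelApprox

theorem influence_multiplicative_bound_general (K : ℕ) (hK : 1 ≤ K)
    (q qhat : ℕ → ℝ → ℝ)
    (hq : ∀ k, k < K → Continuous (q k)) (hqhat : ∀ k, k < K → Continuous (qhat k))
    (hqpos : ∀ k, k < K → ∀ t : ℝ, 0 ≤ t → 0 < q k t)
    (ε : ℝ) (hε : 0 < ε) (hε1 : ε < 1)
    (qbar : ℕ → ℝ)
    (hdelta : ∀ k, k < K → ∀ t : ℝ, 0 < t →
      |qhat k t - q k t| / q k t ≤
        min (Real.log (1 + ε / 2) / (qbar k * t)) (ε / (2 + ε))) :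
    ∀ t : ℝ, 0 < t →
      (1 - ε) ^ K ≤ influence K qhat t / influence K q t ∧
      influence K qhat t / influence K q t ≤ (1 + ε) ^ K ∧
      |influence K qhat t - influence K q t| / influence K q t ≤ (1 + ε) ^ K - 1 := by
  intro t ht
  set η := ε / (2 + ε)
  have hη0 : 0 ≤ η := by positivity
  have hηε : η ≤ ε := div_le_self hε.le (by linarith)
  have happrox : IsRelApprox K η q qhat := by
    refine ⟨hq, hqhat, fun k hk t ht => (hqpos k hk t ht).le, fun k hk t ht => ?_⟩
    refine le_on_closure (fun u (hu : 0 < u) => ?_)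
      ((hqhat k hk).sub (hq k hk)).abs.continuousOn (continuous_const.mul (hq k hk)).continuousOn
      (closure_Ioi (0 : ℝ) ▸ ht)
    exact (div_le_iff₀ (hqpos k hk u hu.le)).1 ((hdelta k hk u hu).trans (min_le_right _ _))
  obtain ⟨hlo, hhi⟩ := happrox.influence_bounds hη0 (by linarith) ht.le
  have hμ := influence_pos hK hq hqpos ht
  have hlo' : (1 - ε) ^ K ≤ (1 - η) ^ K := pow_le_pow_left₀ (by linarith) (by linarith) K
  have hhi' : (1 + η) ^ K ≤ (1 + ε) ^ K := pow_le_pow_left₀ (by linarith) (by linarith) K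
  have h2 := two_le_one_sub_pow_add_one_add_pow (x := ε) (by linarith) (by linarith) K
  refine ⟨(le_div_iff₀ hμ).2 (by nlinarith), (div_le_iff₀ hμ).2 (by nlinarith), ?_⟩
  rw [div_le_iff₀ hμ, abs_le]
  constructor <;> nlinarith

/-- Influence error, multiplicative bound: under the relative rate error bound
`δ_k(t) ≤ min{log(1+ε/2)/(q̄_k t), ε/(2+ε)}` for every `k`, the influences satisfy
`(1-ε)^K ≤ μ̂(t)/μ(t) ≤ (1+ε)^K` and `|μ̂(t) - μ(t)|/μ(t) ≤ (1+ε)^K - 1` for `t > 0`. -/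
theorem influence_multiplicative_bound (K : ℕ) (hK : 1 ≤ K)
    (q qhat : ℕ → ℝ → ℝ)
    (hq : ∀ k, k < K → Continuous (q k)) (hqhat : ∀ k, k < K → Continuous (qhat k))
    (hqpos : ∀ k, k < K → ∀ t : ℝ, 0 ≤ t → 0 < q k t)
    (hqhatpos : ∀ k, k < K → ∀ t : ℝ, 0 ≤ t → 0 < qhat k t)
    (ε : ℝ) (hε : 0 < ε) (hε1 : ε < 1)
    (qbar : ℕ → ℝ) (hqbar : ∀ k, k < K → 0 < qbar k)
    (hqle : ∀ k, k < K → ∀ t : ℝ, 0 ≤ t → q k t ≤ qbar k)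
    (hdelta : ∀ k, k < K → ∀ t : ℝ, 0 < t →
      |qhat k t - q k t| / q k t ≤
        min (Real.log (1 + ε / 2) / (qbar k * t)) (ε / (2 + ε))) :
    ∀ t : ℝ, 0 < t →
      (1 - ε) ^ K ≤ influence K qhat t / influence K q t ∧
      influence K qhat t / influence K q t ≤ (1 + ε) ^ K ∧
      |influence K qhat t - influence K q t| / influence K q t ≤ (1 + ε) ^ K - 1 :=
  influence_multiplicative_bound_general K hK q qhat hq hqhat hqpos ε hε hε1 qbar hdelta
end
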